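/- The diversity gain achieved by the FSIC-PA scheme equals 1: P̂out(P) > 0 for every P > 0, and lim_{P→∞} log P̂out(P) / log P = −1. -/

import Mathlib

open MeasureTheory ProbabilityTheory Real Filter

/-- The interference threshold `τ(g) = max{0, g/α₀ − 1}`. -/
noncomputable def tau (α0 g : ℝ) : ℝ := max 0 (g / α0 - 1)

/-- The FSIC-PA achievable rate of a secondary user with channel gain `h`,
given the primary channel gain `g`. -/
noncomputable def rateFSIC (Ps α0 h g : ℝ) : ℝ :=
  if Ps * h ≤ tau α0 g then Real.logb 2 (1 + Ps * h)
  else Real.logb 2 (1 + tau α0 g)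

/-- The FSIC-PA overall outage probability with equal powers `P0 = Ps = P`, realized on
the canonical probability space carrying `M + 1` i.i.d. rate-one exponential random
variables: coordinate `0` is the primary channel gain `G = |g|²` and coordinates
`1, …, M` are the secondary channel gains `H₁, …, H_M`. -/
noncomputable def outageFSIC (M : ℕ) (R0 Rs P : ℝ) : ℝ :=
  haveI : IsProbabilityMeasure (expMeasure 1) := isProbabilityMeasure_expMeasure one_pos
  ((Measure.pi fun _ : Fin (M + 1) => expMeasure 1)
    {ω | (⨆ m : Fin M, rateFSIC P ((2 ^ R0 - 1) / P) (ω m.succ) (ω 0)) < Rs}).toReal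

/-! Since `R̂(h, G) = log₂ (1 + min (Ps h) τ(G))`, a user is in outage exactly when
`τ(G) < εs` or `Ps h < εs`. With `P0 = Ps = P` the overall outage event is therefore, almost
surely, `{G < x} ∪ {H₁, …, H_M < y}` with `x = ε₀ 2^Rs / P` and `y = εs / P`, of probability
`(1 - e^{-x}) + e^{-x} (1 - e^{-y})^M`. This lies between `x e^{-x}` and `x + y`, both of exact
order `1 / P`, so `log P̂out(P) / log P → -1`. -/

open Set

section ExpMeasure

variable {r : ℝ}

instance nullSingletonClass_expMeasure (r : ℝ) : NullSingletonClass (expMeasure r) :=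
  inferInstanceAs (NullSingletonClass (volume.withDensity (gammaPDF 1 r)))

lemma expMeasure_real_Iio (hr : 0 < r) {t : ℝ} (ht : 0 ≤ t) :
    (expMeasure r).real (Iio t) = 1 - exp (-(r * t)) := by
  have := isProbabilityMeasure_expMeasure hr
  rw [measureReal_congr Iio_ae_eq_Iic, ← cdf_eq_real, cdf_expMeasure_eq hr, if_pos ht]

lemma expMeasure_real_Ici (hr : 0 < r) {t : ℝ} (ht : 0 ≤ t) :
    (expMeasure r).real (Ici t) = exp (-(r * t)) := by
  have := isProbabilityMeasure_expMeasure hr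
  rw [← compl_Iio, measureReal_compl measurableSet_Iio, probReal_univ, expMeasure_real_Iio hr ht,
    sub_sub_cancel]

lemma ae_nonneg_expMeasure (hr : 0 < r) : ∀ᵐ x ∂expMeasure r, 0 ≤ x := by
  have := isProbabilityMeasure_expMeasure hr
  have h : (expMeasure r).real (Iio 0) = 0 := by
    rw [expMeasure_real_Iio hr le_rfl, mul_zero, neg_zero, exp_zero, sub_self]
  rw [ae_iff]
  simp only [not_le]
  exact (measureReal_eq_zero_iff (measure_ne_top _ _)).1 h

end ExpMeasure

section FinSuccPi

variable {α : Type*} {M : ℕ}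

lemma setOf_zero_mem_and_forall_succ_mem (A B : Set α) :
    {ω : Fin (M + 1) → α | ω 0 ∈ A ∧ ∀ m : Fin M, ω m.succ ∈ B} =
      univ.pi (Fin.cons A fun _ => B) := by
  ext ω
  simp [Fin.forall_fin_succ]

variable [MeasurableSpace α] (μ : Measure α) [IsProbabilityMeasure μ]

lemma pi_real_zero_mem_and_forall_succ_mem (A B : Set α) :
    (Measure.pi fun _ : Fin (M + 1) => μ).real
        {ω | ω 0 ∈ A ∧ ∀ m : Fin M, ω m.succ ∈ B} = μ.real A * μ.real B ^ M := by
  rw [setOf_zero_mem_and_forall_succ_mem, measureReal_def, Measure.pi_pi, Fin.prod_univ_succ]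
  simp [measureReal_def]

lemma pi_real_zero_mem_or_forall_succ_mem {A B : Set α} (hA : MeasurableSet A)
    (hB : MeasurableSet B) :
    (Measure.pi fun _ : Fin (M + 1) => μ).real
        {ω | ω 0 ∈ A ∨ ∀ m : Fin M, ω m.succ ∈ B} = μ.real A + μ.real Aᶜ * μ.real B ^ M := by
  have hsplit : {ω : Fin (M + 1) → α | ω 0 ∈ A ∨ ∀ m : Fin M, ω m.succ ∈ B} =
      {ω | ω 0 ∈ A ∧ ∀ m : Fin M, ω m.succ ∈ univ} ∪
        {ω | ω 0 ∈ Aᶜ ∧ ∀ m : Fin M, ω m.succ ∈ B} := by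
    ext ω
    by_cases h : ω 0 ∈ A <;> simp [h]
  have hdisj : Disjoint {ω : Fin (M + 1) → α | ω 0 ∈ A ∧ ∀ m : Fin M, ω m.succ ∈ univ}
      {ω | ω 0 ∈ Aᶜ ∧ ∀ m : Fin M, ω m.succ ∈ B} :=
    disjoint_left.2 fun ω h h' => h'.1 h.1
  have hmeas : MeasurableSet {ω : Fin (M + 1) → α | ω 0 ∈ Aᶜ ∧ ∀ m : Fin M, ω m.succ ∈ B} := by
    rw [setOf_zero_mem_and_forall_succ_mem]
    exact MeasurableSet.univ_pi fun i => Fin.cases hA.compl (fun _ => hB) i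
  rw [hsplit, measureReal_union hdisj hmeas, pi_real_zero_mem_and_forall_succ_mem,
    pi_real_zero_mem_and_forall_succ_mem, probReal_univ, one_pow, mul_one]

end FinSuccPi

lemma ciSup_lt_iff_of_finite {ι α : Type*} [Finite ι] [Nonempty ι]
    [ConditionallyCompleteLinearOrder α] {f : ι → α} {a : α} :
    (⨆ i, f i) < a ↔ ∀ i, f i < a := by
  refine ⟨fun h i => (le_ciSup (finite_range f).bddAbove i).trans_lt h, fun h => ?_⟩
  obtain ⟨i, hi⟩ := exists_eq_ciSup_of_finite (f := f)
  exact hi ▸ h i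

lemma tau_nonneg (α0 g : ℝ) : 0 ≤ tau α0 g := le_max_left _ _

lemma tau_lt_iff {α0 c g : ℝ} (hα0 : 0 < α0) (hc : 0 < c) : tau α0 g < c ↔ g < (c + 1) * α0 := by
  rw [tau, max_lt_iff, sub_lt_iff_lt_add, div_lt_iff₀ hα0]
  simp [hc]

lemma rateFSIC_eq_logb_min (Ps α0 h g : ℝ) :
    rateFSIC Ps α0 h g = logb 2 (1 + min (Ps * h) (tau α0 g)) := by
  rw [rateFSIC, min_def]
  split_ifs <;> rfl

lemma rateFSIC_lt_iff {Ps α0 h g : ℝ} (Rs : ℝ) (hPs : 0 ≤ Ps) (hh : 0 ≤ h) :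
    rateFSIC Ps α0 h g < Rs ↔ Ps * h < 2 ^ Rs - 1 ∨ tau α0 g < 2 ^ Rs - 1 := by
  have hmin : 0 ≤ min (Ps * h) (tau α0 g) := le_min (mul_nonneg hPs hh) (tau_nonneg α0 g)
  rw [rateFSIC_eq_logb_min, logb_lt_iff_lt_rpow one_lt_two (by linarith), ← lt_sub_iff_add_lt',
    min_lt_iff]

lemma iSup_rateFSIC_lt_iff {ι : Type*} [Finite ι] [Nonempty ι] {Ps α0 g : ℝ} {h : ι → ℝ}
    (Rs : ℝ) (hPs : 0 ≤ Ps) (hh : ∀ i, 0 ≤ h i) :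
    (⨆ i, rateFSIC Ps α0 (h i) g) < Rs ↔
      tau α0 g < 2 ^ Rs - 1 ∨ ∀ i, Ps * h i < 2 ^ Rs - 1 := by
  simp only [ciSup_lt_iff_of_finite, rateFSIC_lt_iff Rs hPs (hh _), forall_or_right]
  exact or_comm

/-- The outage probability in terms of the thresholds `x` on `G` and `y` on the `Hₘ`: outage means
`G < x`, or `G ≥ x` and all `Hₘ < y`. -/
noncomputable def outageClosedForm (M : ℕ) (x y : ℝ) : ℝ :=
  (1 - exp (-x)) + exp (-x) * (1 - exp (-y)) ^ M

lemma outageFSIC_eq {M : ℕ} (hM : 1 ≤ M) {R0 Rs P : ℝ} (hR0 : 0 < R0) (hRs : 0 < Rs)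
    (hP : 0 < P) :
    outageFSIC M R0 Rs P = outageClosedForm M ((2 ^ R0 - 1) * 2 ^ Rs / P) ((2 ^ Rs - 1) / P) := by
  have := isProbabilityMeasure_expMeasure one_pos
  have : Nonempty (Fin M) := ⟨⟨0, hM⟩⟩
  have hε0 : (0 : ℝ) < 2 ^ R0 - 1 := sub_pos.2 (one_lt_rpow one_lt_two hR0)
  have hεs : (0 : ℝ) < 2 ^ Rs - 1 := sub_pos.2 (one_lt_rpow one_lt_two hRs)
  have hthreshold : (2 ^ Rs - 1 + 1) * ((2 ^ R0 - 1) / P) = (2 ^ R0 - 1) * 2 ^ Rs / P := by ring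
  set μ := Measure.pi fun _ : Fin (M + 1) => expMeasure 1
  have hnonneg : ∀ᵐ ω ∂μ, ∀ m : Fin M, 0 ≤ ω m.succ := ae_all_iff.2 fun m =>
    (Measure.quasiMeasurePreserving_eval _ m.succ).ae (ae_nonneg_expMeasure one_pos)
  have hevent : {ω | (⨆ m : Fin M, rateFSIC P ((2 ^ R0 - 1) / P) (ω m.succ) (ω 0)) < Rs} =ᵐ[μ]
      {ω | ω 0 ∈ Iio ((2 ^ R0 - 1) * 2 ^ Rs / P) ∨
        ∀ m : Fin M, ω m.succ ∈ Iio ((2 ^ Rs - 1) / P)} := by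
    refine eventuallyEq_set.2 ?_
    filter_upwards [hnonneg] with ω hω
    simp only [mem_Iio, iSup_rateFSIC_lt_iff Rs hP.le hω,
      tau_lt_iff (div_pos hε0 hP) hεs, hthreshold, ← lt_div_iff₀' hP]
  change μ.real _ = _
  rw [measureReal_congr hevent,
    pi_real_zero_mem_or_forall_succ_mem _ measurableSet_Iio measurableSet_Iio, compl_Iio,
    expMeasure_real_Iio one_pos (by positivity), expMeasure_real_Ici one_pos (by positivity),
    expMeasure_real_Iio one_pos (by positivity)]
  simp only [one_mul, outageClosedForm]

section ClosedForm

variable {M : ℕ} {x y : ℝ}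

lemma one_sub_exp_neg_nonneg (hy : 0 ≤ y) : 0 ≤ 1 - exp (-y) :=
  sub_nonneg.2 (exp_le_one_iff.2 (neg_nonpos.2 hy))

lemma outageClosedForm_pos (hx : 0 < x) (hy : 0 ≤ y) : 0 < outageClosedForm M x y := by
  have hx' : 0 < 1 - exp (-x) := sub_pos.2 (exp_lt_one_iff.2 (neg_lt_zero.2 hx))
  have hy' := one_sub_exp_neg_nonneg hy
  exact add_pos_of_pos_of_nonneg hx' (by positivity)

lemma mul_exp_neg_le_outageClosedForm (hy : 0 ≤ y) : x * exp (-x) ≤ outageClosedForm M x y := by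
  have hx' : x * exp (-x) ≤ 1 - exp (-x) :=
    calc x * exp (-x) = (x + 1) * exp (-x) - exp (-x) := by ring
      _ ≤ exp x * exp (-x) - exp (-x) := by gcongr; exact add_one_le_exp x
      _ = 1 - exp (-x) := by rw [← exp_add, add_neg_cancel, exp_zero]
  have hy' := one_sub_exp_neg_nonneg hy
  have : 0 ≤ exp (-x) * (1 - exp (-y)) ^ M := by positivity
  rw [outageClosedForm]
  linarith

lemma outageClosedForm_le (hM : M ≠ 0) (hx : 0 ≤ x) (hy : 0 ≤ y) :
    outageClosedForm M x y ≤ x + y := by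
  have hy' := one_sub_exp_neg_nonneg hy
  have hy'' : 1 - exp (-y) ≤ 1 := by linarith [exp_pos (-y)]
  calc outageClosedForm M x y ≤ x + 1 * y := by
        rw [outageClosedForm]
        gcongr
        · linarith [one_sub_le_exp_neg x]
        · exact exp_le_one_iff.2 (neg_nonpos.2 hx)
        · exact (pow_le_of_le_one hy' hy'' hM).trans (by linarith [one_sub_le_exp_neg y])
    _ = x + y := by ring

end ClosedForm

lemma tendsto_log_div_log_of_le_of_le {f : ℝ → ℝ} {c C : ℝ} (hc : 0 < c) (hC : 0 < C)
    (hf : ∀ᶠ P in atTop, c / P ≤ f P ∧ f P ≤ C / P) :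
    Tendsto (fun P => log (f P) / log P) atTop (nhds (-1)) := by
  have hbound : ∀ k : ℝ, 0 < k → Tendsto (fun P => log (k / P) / log P) atTop (nhds (-1)) := by
    intro k hk
    have := ((tendsto_const_nhds (x := log k)).div_atTop tendsto_log_atTop).sub_const 1
    rw [zero_sub] at this
    refine this.congr' ?_
    filter_upwards [eventually_gt_atTop 1] with P hP
    rw [log_div hk.ne' (by positivity), sub_div, div_self (log_pos hP).ne']
  refine tendsto_of_tendsto_of_tendsto_of_le_of_le' (hbound c hc) (hbound C hC) ?_ ?_ <;>
    filter_upwards [hf, eventually_gt_atTop 1] with P hfP hP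
  · exact div_le_div_of_nonneg_right (log_le_log (by positivity) hfP.1) (log_nonneg hP.le)
  · exact div_le_div_of_nonneg_right (log_le_log ((by positivity : 0 < c / P).trans_le hfP.1)
      hfP.2) (log_nonneg hP.le)

/-- Remark 4: the diversity gain of the FSIC-PA scheme is `1`:
the outage probability is positive for every `P > 0` and
`log P̂out(P) / log P → −1` as `P → ∞`. -/
theorem fsic_pa_diversity_gain
    (M : ℕ) (hM : 1 ≤ M) (R0 Rs : ℝ) (hR0 : 0 < R0) (hRs : 0 < Rs) :
    (∀ P > (0 : ℝ), 0 < outageFSIC M R0 Rs P) ∧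
    Tendsto (fun P : ℝ => Real.log (outageFSIC M R0 Rs P) / Real.log P)
      atTop (nhds (-1 : ℝ)) := by
  set a : ℝ := (2 ^ R0 - 1) * 2 ^ Rs
  set b : ℝ := 2 ^ Rs - 1
  have ha : 0 < a := mul_pos (sub_pos.2 (one_lt_rpow one_lt_two hR0)) (by positivity)
  have hb : 0 < b := sub_pos.2 (one_lt_rpow one_lt_two hRs)
  refine ⟨fun P hP => ?_, tendsto_log_div_log_of_le_of_le (c := a * exp (-a)) (C := a + b)
    (by positivity) (by positivity) ?_⟩
  · rw [outageFSIC_eq hM hR0 hRs hP]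
    exact outageClosedForm_pos (by positivity) (by positivity)
  filter_upwards [eventually_ge_atTop 1] with P hP1
  have hP : 0 < P := one_pos.trans_le hP1
  rw [outageFSIC_eq hM hR0 hRs hP]
  constructor
  · calc a * exp (-a) / P = a / P * exp (-a) := by ring
      _ ≤ a / P * exp (-(a / P)) := by gcongr; exact div_le_self ha.le hP1
      _ ≤ _ := mul_exp_neg_le_outageClosedForm (by positivity)
  · rw [add_div]
    exact outageClosedForm_le (by omega) (by positivity) (by positivity)
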